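/- arXiv:2604.21187 — 2 statements merged into one kernel-verified Lean document; each statement's English description precedes it below -/
import Mathlib

section
/- Let t ≥ 4, m = t−2, n = 6m+1, and let G be the circulant graph on ℤ/nℤ with distance set {m} ∪ [2m+1, 3m]. Then G contains no clique of size 4. -/
/-- The cyclic distance ‖x‖ = min(x mod n, n − (x mod n)) for x ∈ ℤ/nℤ. -/
def cyclicDist (n : ℕ) (x : ZMod n) : ℕ := min x.val (n - x.val)

/-- The circulant graph on `ZMod n` with distance set `S`: `x ~ y` iff `‖x - y‖ ∈ S`. -/
def circ (n : ℕ) (S : Set ℕ) : SimpleGraph (ZMod n) :=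
  SimpleGraph.fromRel (fun x y => cyclicDist n (x - y) ∈ S)

/-- `G` is `R(s,t)`-good: no clique of size `s` and no independent set of size `t`. -/
def RGood {V : Type*} (s t : ℕ) (G : SimpleGraph V) : Prop :=
  G.CliqueFree s ∧ Gᶜ.CliqueFree t

/-- `G` is doubly saturated `R(s,t)`-good. -/
def DoublySaturated {V : Type*} (s t : ℕ) (G : SimpleGraph V) : Prop :=
  RGood s t G ∧
  (∀ u v : V, u ≠ v → ¬ G.Adj u v → ¬ (G ⊔ SimpleGraph.edge u v).CliqueFree s) ∧
  (∀ u v : V, G.Adj u v → ¬ ((G.deleteEdges {s(u, v)})ᶜ.CliqueFree t)) ∧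
  G ≠ ⊤ ∧ Gᶜ ≠ ⊤


/-! Write a 4-clique as `v₀, v₁, v₂, v₃` and put `x = v₁ - v₀`, `y = v₂ - v₁`, `z = v₃ - v₂`.
Then `x, y, z, x + y, y + z, x + y + z` are all differences of adjacent vertices. In `ℤ/(6m+1)` the
difference of adjacent vertices has representative in `{m, 5m+1} ∪ [2m+1, 4m]`, and since each
sum of representatives wraps around `6m+1` at most once, the six conditions are incompatible: a
case analysis on linear inequalities. -/

lemma ZMod.val_add_eq_or {n : ℕ} [NeZero n] (a b : ZMod n) :
    (a + b).val = a.val + b.val ∨ (a + b).val + n = a.val + b.val := by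
  rcases lt_or_ge (a.val + b.val) n with h | h
  · exact .inl (ZMod.val_add_of_lt h)
  · exact .inr (ZMod.val_add_val_of_le h).symm

lemma cyclicDist_neg {n : ℕ} (x : ZMod n) : cyclicDist n (-x) = cyclicDist n x := by
  rcases n.eq_zero_or_pos with rfl | hn
  · simp [cyclicDist]
  · have : NeZero n := ⟨hn.ne'⟩
    have := x.val_lt
    unfold cyclicDist
    rw [ZMod.neg_val]
    split_ifs with h
    · simp [h]
    · omega

lemma circ_adj {n : ℕ} {S : Set ℕ} {x y : ZMod n} :
    (circ n S).Adj x y ↔ x ≠ y ∧ cyclicDist n (x - y) ∈ S := by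
  rw [circ, SimpleGraph.fromRel_adj, ← neg_sub x y, cyclicDist_neg, or_self]

def distSet (m : ℕ) : Set ℕ := {m} ∪ Set.Icc (2 * m + 1) (3 * m)

lemma cyclicDist_mem_distSet_iff {m : ℕ} (x : ZMod (6 * m + 1)) :
    cyclicDist (6 * m + 1) x ∈ distSet m ↔
      x.val = m ∨ x.val = 5 * m + 1 ∨ (2 * m + 1 ≤ x.val ∧ x.val ≤ 4 * m) := by
  have := x.val_lt
  simp only [cyclicDist, distSet, Set.mem_union, Set.mem_singleton_iff, Set.mem_Icc]
  omega

lemma false_of_interval_sums_mem_distSet {m : ℕ} (hm : 0 < m) (x y z : ZMod (6 * m + 1))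
    (hx : cyclicDist _ x ∈ distSet m) (hy : cyclicDist _ y ∈ distSet m)
    (hz : cyclicDist _ z ∈ distSet m) (hxy : cyclicDist _ (x + y) ∈ distSet m)
    (hyz : cyclicDist _ (y + z) ∈ distSet m) (hxyz : cyclicDist _ (x + y + z) ∈ distSet m) :
    False := by
  rw [cyclicDist_mem_distSet_iff] at hx hy hz hxy hyz hxyz
  have := (x + y).val_lt
  rcases (x + y).val_add_eq_or z with h | h <;>
  rcases x.val_add_eq_or y with h' | h' <;>
  rcases y.val_add_eq_or z with h'' | h''
  all_goals omega

theorem stmt_1_general (m n : ℕ) (hn : n = 6 * m + 1) :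
    (circ n ({m} ∪ Set.Icc (2 * m + 1) (3 * m))).CliqueFree 4 := by
  subst hn
  rcases m.eq_zero_or_pos with rfl | hm
  · exact SimpleGraph.cliqueFree_of_card_lt (by simp)
  refine SimpleGraph.cliqueFree_iff.2 ⟨fun f => ?_⟩
  have hf (i j : Fin 4) (hij : i ≠ j) : cyclicDist _ (f i - f j) ∈ distSet m :=
    (circ_adj.1 (f.toHom.map_adj hij)).2
  apply false_of_interval_sums_mem_distSet hm (f 1 - f 0) (f 2 - f 1) (f 3 - f 2)
  all_goals first
    | exact hf _ _ (by decide)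
    | simpa only [sub_add_sub_cancel'] using hf _ _ (by decide)

theorem stmt_1 (t m n : ℕ) (ht : 4 ≤ t) (hm : m = t - 2) (hn : n = 6 * m + 1) :
    (circ n ({m} ∪ Set.Icc (2 * m + 1) (3 * m))).CliqueFree 4 :=
  stmt_1_general m n hn
end

section
/- If G is a doubly saturated R(s,t)-good graph with s, t ≥ 3, then every vertex of G has degree at least 2(s−2) and degree at most n − 2t + 3, where n is the number of vertices of G. -/
/-!
The neighbourhood `N(v)` of a vertex `v` has no `(s-1)`-clique, as `G` is `K_s`-free, but it has
`(s-2)`-cliques: adding a missing edge `vu` creates an `s`-clique. Every `a ∈ N(v)` is missed by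
one of them: deleting the edge `va` creates an independent `t`-set, which (as `t ≥ 3`) contains a
common non-neighbour `z` of `v` and `a`, and the `(s-2)`-clique created by adding `vz` lies in
`N(v)` and misses `a`. By Hajnal's lemma a graph whose maximum cliques have no common vertex has
at least twice its clique number of vertices, so `deg v ≥ 2(s-2)`. The complement of `G` is doubly
saturated `R(t,s)`-good, and the same bound for it is the upper bound `deg v ≤ n - 2t + 3`.
-/

open Finset SimpleGraph

namespace SimpleGraph

variable {V : Type*} {G : SimpleGraph V}

lemma CliqueFreeOn.card_le {k : ℕ} {s : Set V} (h : G.CliqueFreeOn s (k + 1)) {C : Finset V}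
    (hCs : (C : Set V) ⊆ s) (hC : G.IsClique (C : Set V)) : #C ≤ k := by
  by_contra! hk
  obtain ⟨C', hC'C, hC'card⟩ := exists_subset_card_eq hk
  exact h ((coe_subset.2 hC'C).trans hCs) ⟨hC.subset (coe_subset.2 hC'C), hC'card⟩

section NonAdjIn

variable [DecidableEq V] (G) [DecidableRel G.Adj]

def nonAdjIn (W X : Finset V) : Finset V := {y ∈ W \ X | ∃ x ∈ X, ¬G.Adj x y}

variable {G} {W X Y B : Finset V} {k : ℕ}

lemma nonAdjIn_subset_sdiff : G.nonAdjIn W X ⊆ W \ X := filter_subset _ _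

lemma isClique_union_sdiff_nonAdjIn (hX : G.IsClique (X : Set V)) (hB : G.IsClique (B : Set V))
    (hBW : B ⊆ W) : G.IsClique ((X ∪ B \ G.nonAdjIn W X : Finset V) : Set V) := by
  have hcross : ∀ x ∈ X, ∀ b ∈ B \ G.nonAdjIn W X, x ≠ b → G.Adj x b := by
    intro x hx b hb hxb
    obtain ⟨hbB, hbD⟩ := mem_sdiff.1 hb
    by_cases hbX : b ∈ X
    · exact hX hx hbX hxb
    · by_contra hnadj
      exact hbD (mem_filter.2 ⟨mem_sdiff.2 ⟨hBW hbB, hbX⟩, x, hx, hnadj⟩)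
  rw [coe_union]
  rintro x (hx | hx) y (hy | hy) hxy
  · exact hX hx hy hxy
  · exact hcross x hx y hy hxy
  · exact (hcross y hy x hx hxy.symm).symm
  · exact hB (mem_sdiff.1 hx).1 (mem_sdiff.1 hy).1 hxy

lemma card_le_card_nonAdjIn_inter_add (hW : G.CliqueFreeOn W (k + 1)) (hXW : X ⊆ W)
    (hX : G.IsClique (X : Set V)) (hBW : B ⊆ W) (hB : G.IsNClique k B) :
    #X ≤ #(G.nonAdjIn W X ∩ B) + #(X ∩ B) := by
  have hclique := hW.card_le
    (by push_cast; exact Set.union_subset hXW (Set.sdiff_subset.trans hBW))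
    (isClique_union_sdiff_nonAdjIn hX hB.isClique hBW)
  have hunion := card_union_add_card_inter X (B \ G.nonAdjIn W X)
  have hB_split := card_sdiff_add_card_inter B (G.nonAdjIn W X)
  have hinter : #(X ∩ (B \ G.nonAdjIn W X)) ≤ #(X ∩ B) :=
    card_le_card (inter_subset_inter_left sdiff_subset)
  rw [inter_comm B, hB.card_eq] at hB_split
  omega

lemma nonAdjIn_mono (hYX : Y ⊆ X) (hX : G.IsClique (X : Set V)) :
    G.nonAdjIn W Y ⊆ G.nonAdjIn W X := by
  intro y hy
  obtain ⟨hy, x, hxY, hxy⟩ := mem_filter.1 hy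
  obtain ⟨hyW, hyY⟩ := mem_sdiff.1 hy
  have hyX : y ∉ X := fun hyX => hxy (hX (hYX hxY) hyX (by rintro rfl; exact hyY hxY))
  exact mem_filter.2 ⟨mem_sdiff.2 ⟨hyW, hyX⟩, x, hYX hxY, hxy⟩

lemma disjoint_nonAdjIn (hYB : Y ⊆ B) (hB : G.IsClique (B : Set V)) :
    Disjoint (G.nonAdjIn W Y) B := by
  rw [Finset.disjoint_left]
  intro y hy hyB
  obtain ⟨hy, x, hxY, hxy⟩ := mem_filter.1 hy
  exact hxy (hB (hYB hxY) hyB (by rintro rfl; exact (mem_sdiff.1 hy).2 hxY))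

lemma card_le_card_nonAdjIn (hW : G.CliqueFreeOn W (k + 1))
    (hcov : ∀ a ∈ W, ∃ B ⊆ W, G.IsNClique k B ∧ a ∉ B) (hXW : X ⊆ W)
    (hX : G.IsClique (X : Set V)) : #X ≤ #(G.nonAdjIn W X) := by
  induction X using Finset.strongInduction with
  | H X ih =>
  obtain rfl | ⟨x, hx⟩ := X.eq_empty_or_nonempty
  · simp
  obtain ⟨B, hBW, hB, hxB⟩ := hcov x (hXW hx)
  have hXB : X ∩ B ⊂ X := ⟨inter_subset_left, fun h => hxB (mem_inter.1 (h hx)).2⟩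
  have ih_XB :=
    ih _ hXB (inter_subset_left.trans hXW) (hX.subset (coe_subset.2 inter_subset_left))
  have hsplit : #(G.nonAdjIn W X ∩ B) + #(G.nonAdjIn W (X ∩ B)) ≤ #(G.nonAdjIn W X) := by
    rw [← card_union_of_disjoint
      ((disjoint_nonAdjIn inter_subset_right hB.isClique).symm.mono_left inter_subset_right)]
    exact card_le_card (union_subset inter_subset_left (nonAdjIn_mono inter_subset_left hX))
  have := card_le_card_nonAdjIn_inter_add hW hXW hX hBW hB
  omega

theorem two_mul_le_card_of_forall_exists_isNClique_notMem (hW : G.CliqueFreeOn W (k + 1))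
    (hcov : ∀ a ∈ W, ∃ B ⊆ W, G.IsNClique k B ∧ a ∉ B) {S : Finset V} (hSW : S ⊆ W)
    (hS : G.IsNClique k S) : 2 * k ≤ #W := by
  have hS_le := card_le_card_nonAdjIn hW hcov hSW hS.isClique
  have hdisj : Disjoint S (G.nonAdjIn W S) :=
    disjoint_right.2 fun _ hy => (mem_sdiff.1 (nonAdjIn_subset_sdiff hy)).2
  have hcard := card_le_card
    (union_subset hSW ((nonAdjIn_subset_sdiff (G := G) (X := S)).trans sdiff_subset))
  rw [card_union_of_disjoint hdisj] at hcard
  linarith [hS.card_eq]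

end NonAdjIn

lemma compl_deleteEdges_edge (G : SimpleGraph V) (u v : V) :
    (G.deleteEdges {s(u, v)})ᶜ = Gᶜ ⊔ edge u v := by
  rw [deleteEdges, compl_sdiff, himp_eq, sup_comm]
  rfl

lemma exists_isNClique_subset_commonNeighbors [DecidableEq V] {k : ℕ}
    (hG : Maximal (fun H => H.CliqueFree (k + 2)) G) {u v : V} (huv : u ≠ v)
    (hn : ¬G.Adj u v) :
    ∃ A : Finset V, G.IsNClique k A ∧ (A : Set V) ⊆ G.commonNeighbors u v := by
  obtain ⟨A, huA, hvA, hu, hv⟩ := exists_of_maximal_cliqueFree_not_adj hG huv hn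
  refine ⟨A, by simpa [erase_insert huA] using hu.erase_of_mem (mem_insert_self u A),
    fun a ha => ⟨?_, ?_⟩⟩
  · exact hu.isClique (mem_insert_self u A) (mem_insert_of_mem ha) (by rintro rfl; exact huA ha)
  · exact hv.isClique (mem_insert_self v A) (mem_insert_of_mem ha) (by rintro rfl; exact hvA ha)

end SimpleGraph

namespace DoublySaturated

variable {V : Type*} {G : SimpleGraph V} {s t k : ℕ}

lemma compl (hG : DoublySaturated s t G) : DoublySaturated t s Gᶜ := by
  obtain ⟨⟨hKs, hKt⟩, hadd, hdel, hG_top, hGc_top⟩ := hG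
  refine ⟨⟨hKt, by rwa [compl_compl]⟩, fun u v huv hn => ?_, fun u v huv => ?_, hGc_top,
    by rwa [compl_compl]⟩
  · rw [← compl_deleteEdges_edge]
    exact hdel u v (not_not.1 fun h => hn ((compl_adj G u v).2 ⟨huv, h⟩))
  · rw [compl_deleteEdges_edge, compl_compl]
    exact hadd u v huv.ne ((compl_adj G u v).1 huv).2

lemma maximal_cliqueFree (hG : DoublySaturated s t G) : Maximal (fun H => H.CliqueFree s) G := by
  refine ⟨hG.1.1, fun H hH hGH u v huv => ?_⟩
  by_contra hn
  exact hG.2.1 u v huv.ne hn (hH.anti (sup_le hGH ((edge_le_iff H).2 (Or.inr huv))))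

lemma exists_common_compl_adj (hG : DoublySaturated s t G) (ht : 3 ≤ t) {a b : V}
    (hab : G.Adj a b) : ∃ z, Gᶜ.Adj a z ∧ Gᶜ.Adj b z := by
  classical
  obtain ⟨m, rfl⟩ : ∃ m, t = m + 1 + 2 := ⟨t - 3, by omega⟩
  obtain ⟨A, hA, hAab⟩ :=
    exists_isNClique_subset_commonNeighbors hG.compl.maximal_cliqueFree hab.ne
      fun h => ((compl_adj G a b).1 h).2 hab
  obtain ⟨z, hz⟩ := card_pos.1 (by rw [hA.card_eq]; exact m.succ_pos)
  exact ⟨z, hAab hz⟩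

lemma exists_compl_adj (hG : DoublySaturated s t G) (ht : 3 ≤ t) (v : V) :
    ∃ u, Gᶜ.Adj v u := by
  obtain ⟨x, y, hxy⟩ := ne_bot_iff_exists_adj.1 (compl_eq_bot.not.2 hG.2.2.2.1)
  have := hxy.nontrivial
  obtain ⟨w, hw⟩ := exists_ne v
  by_cases hvw : G.Adj v w
  · obtain ⟨z, hz, -⟩ := hG.exists_common_compl_adj ht hvw
    exact ⟨z, hz⟩
  · exact ⟨w, (compl_adj G v w).2 ⟨hw.symm, hvw⟩⟩

lemma two_mul_le_degree (hG : DoublySaturated (k + 2) t G) (ht : 3 ≤ t) (v : V)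
    [Fintype (G.neighborSet v)] : 2 * k ≤ G.degree v := by
  classical
  have hmax := hG.maximal_cliqueFree
  obtain ⟨u, hvu⟩ := hG.exists_compl_adj ht v
  obtain ⟨S, hS, hSv⟩ :=
    exists_isNClique_subset_commonNeighbors hmax hvu.ne ((compl_adj G v u).1 hvu).2
  rw [← card_neighborFinset_eq_degree]
  refine two_mul_le_card_of_forall_exists_isNClique_notMem ?_ ?_
    (fun a ha => (mem_neighborFinset G v a).2 (hSv ha).1) hS
  · simpa using hG.1.1.cliqueFreeOn.of_succ G (Set.mem_univ v)
  · intro a ha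
    obtain ⟨z, hvz, haz⟩ := hG.exists_common_compl_adj ht ((mem_neighborFinset G v a).1 ha)
    obtain ⟨B, hB, hBvz⟩ :=
      exists_isNClique_subset_commonNeighbors hmax hvz.ne ((compl_adj G v z).1 hvz).2
    exact ⟨B, fun b hb => (mem_neighborFinset G v b).2 (hBvz hb).1, hB,
      fun haB => ((compl_adj G a z).1 haz).2 (hBvz haB).2.symm⟩

end DoublySaturated

theorem stmt_8 (s t : ℕ) (hs : 3 ≤ s) (ht : 3 ≤ t)
    {V : Type*} [Fintype V] (G : SimpleGraph V) [DecidableRel G.Adj]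
    (hG : DoublySaturated s t G) :
    ∀ v : V, 2 * (s - 2) ≤ G.degree v ∧
      (G.degree v : ℤ) ≤ (Fintype.card V : ℤ) - 2 * t + 3 := by
  classical
  obtain ⟨k, rfl⟩ : ∃ k, s = k + 2 := ⟨s - 2, by omega⟩
  obtain ⟨m, rfl⟩ : ∃ m, t = m + 2 := ⟨t - 2, by omega⟩
  intro v
  have hdeg := hG.two_mul_le_degree ht v
  have hdeg_compl := hG.compl.two_mul_le_degree hs v
  have hcompl := G.degree_compl v
  have hlt := G.degree_lt_card_verts v
  constructor <;> omega
end
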